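/- Let N ≤ L and d ≤ N. Let H ∈ ℂ^{N×L} be written H^H = F·C with F ∈ ℂ^{L×N} truncated unitary (F^H F = I_N) and C ∈ ℂ^{N×N} invertible. Let F̂ ∈ ℂ^{L×N} be truncated unitary (F̂^H F̂ = I_N), let Ũ ∈ ℂ^{N×d} and V ∈ ℂ^{L×m} be truncated unitary (Ũ^H Ũ = I_d, V^H V = I_m), and suppose the quantized alignment equation Ũ^H F̂^H V = 0 holds. Define the receive filter G = C^{-1} F^H F̂ Ũ. Then for every P > 0 the interference leakage power satisfies L := (P/d)·‖G^H H V‖_F² ≤ P·‖F F^H − F̂ F̂^H‖_F² = 2P·d_c²(F̂, F). -/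

import Mathlib

/-!
Because `(C⁻¹)ᴴ Cᴴ = 1`, the effective channel is `Gᴴ H = Ũᴴ F̂ᴴ F Fᴴ`, and the alignment
condition `Ũᴴ F̂ᴴ V = 0` lets one subtract the projector `F̂ F̂ᴴ` for free, so the leakage matrix is
`(F̂ Ũ)ᴴ (F Fᴴ - F̂ F̂ᴴ) V`. Multiplying by a matrix with orthonormal columns, on either side,
cannot increase the Frobenius norm: `‖B‖² = ‖B V‖² + ‖B (1 - V Vᴴ)‖²` since `V Vᴴ` is an
orthogonal projection.
-/

open Matrix

/-- Squared Frobenius norm of a complex matrix. -/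
noncomputable def frobNormSq {m n : Type*} [Fintype m] [Fintype n]
    (A : Matrix m n ℂ) : ℝ :=
  ∑ i, ∑ j, ‖A i j‖ ^ 2

/-- Squared chordal distance between the column spaces of two truncated unitary
matrices: `d_c(X,Y)² = (1/2) ‖X Xᴴ − Y Yᴴ‖_F²`. -/
noncomputable def chordalDistSq {L N : ℕ} (X Y : Matrix (Fin L) (Fin N) ℂ) : ℝ :=
  (1 / 2) * frobNormSq (X * Xᴴ - Y * Yᴴ)

section
variable {m n p : Type*} [Fintype m] [Fintype n] [Fintype p]

lemma frobNormSq_nonneg (A : Matrix m n ℂ) : 0 ≤ frobNormSq A := by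
  unfold frobNormSq; positivity

lemma frobNormSq_conjTranspose (A : Matrix m n ℂ) : frobNormSq Aᴴ = frobNormSq A := by
  simp only [frobNormSq, conjTranspose_apply, norm_star]
  exact Finset.sum_comm

lemma frobNormSq_neg (A : Matrix m n ℂ) : frobNormSq (-A) = frobNormSq A := by
  simp only [frobNormSq, Matrix.neg_apply, norm_neg]

lemma frobNormSq_sub_comm (A B : Matrix m n ℂ) : frobNormSq (A - B) = frobNormSq (B - A) := by
  rw [← frobNormSq_neg, neg_sub]

lemma frobNormSq_eq_re_trace_mul_conjTranspose (A : Matrix m n ℂ) :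
    frobNormSq A = (A * Aᴴ).trace.re := by
  simp only [frobNormSq, trace, diag, mul_apply, conjTranspose_apply, Complex.re_sum,
    Complex.star_def, Complex.mul_conj', ← Complex.ofReal_pow, Complex.ofReal_re]

variable [DecidableEq n] [DecidableEq p]

lemma one_sub_mul_conjTranspose_mul_self {V : Matrix n p ℂ} (hV : Vᴴ * V = 1) :
    (1 - V * Vᴴ) * (1 - V * Vᴴ)ᴴ = 1 - V * Vᴴ := by
  have hproj : V * Vᴴ * (V * Vᴴ) = V * Vᴴ := by
    rw [Matrix.mul_assoc, ← Matrix.mul_assoc Vᴴ, hV, Matrix.one_mul]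
  simp only [conjTranspose_sub, conjTranspose_one, conjTranspose_mul, conjTranspose_conjTranspose,
    sub_mul, mul_sub, Matrix.one_mul, Matrix.mul_one, hproj, sub_self, sub_zero]

lemma frobNormSq_mul_add_frobNormSq_mul_one_sub (B : Matrix m n ℂ) {V : Matrix n p ℂ}
    (hV : Vᴴ * V = 1) :
    frobNormSq (B * V) + frobNormSq (B * (1 - V * Vᴴ)) = frobNormSq B := by
  simp only [frobNormSq_eq_re_trace_mul_conjTranspose, ← Complex.add_re, ← trace_add]
  congr 2
  calc B * V * (B * V)ᴴ + B * (1 - V * Vᴴ) * (B * (1 - V * Vᴴ))ᴴ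
      = B * (V * Vᴴ + (1 - V * Vᴴ) * (1 - V * Vᴴ)ᴴ) * Bᴴ := by
        simp only [conjTranspose_mul, Matrix.mul_add, Matrix.add_mul, Matrix.mul_assoc]
    _ = B * Bᴴ := by
        rw [one_sub_mul_conjTranspose_mul_self hV, add_sub_cancel, Matrix.mul_one]

lemma frobNormSq_mul_le {V : Matrix n p ℂ} (hV : Vᴴ * V = 1) (B : Matrix m n ℂ) :
    frobNormSq (B * V) ≤ frobNormSq B :=
  (frobNormSq_mul_add_frobNormSq_mul_one_sub B hV).symm ▸
    le_add_of_nonneg_right (frobNormSq_nonneg _)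

lemma frobNormSq_conjTranspose_mul_le {W : Matrix n p ℂ} (hW : Wᴴ * W = 1)
    (B : Matrix n m ℂ) : frobNormSq (Wᴴ * B) ≤ frobNormSq B := by
  simpa only [← frobNormSq_conjTranspose B, ← frobNormSq_conjTranspose (Wᴴ * B),
    conjTranspose_mul, conjTranspose_conjTranspose] using frobNormSq_mul_le hW Bᴴ

end

section
variable {α : Type*} [CommRing α] [StarRing α] {k l n : Type*} [Fintype l] [Fintype n]
  [DecidableEq n]

lemma conjTranspose_mul_self_mul_eq_one [DecidableEq k] {A : Matrix l n α} {B : Matrix n k α}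
    (hA : Aᴴ * A = 1) (hB : Bᴴ * B = 1) : (A * B)ᴴ * (A * B) = 1 := by
  rw [conjTranspose_mul, Matrix.mul_assoc, ← Matrix.mul_assoc Aᴴ, hA, Matrix.one_mul, hB]

lemma receive_filter_conjTranspose_mul_channel {H : Matrix n l α} {F : Matrix l n α}
    {C : Matrix n n α} (hFC : Hᴴ = F * C) (hC : IsUnit C.det) (Fhat : Matrix l n α)
    (U : Matrix n k α) : (C⁻¹ * Fᴴ * Fhat * U)ᴴ * H = Uᴴ * Fhatᴴ * (F * Fᴴ) := by
  have hH : H = Cᴴ * Fᴴ := by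
    rw [← conjTranspose_conjTranspose H, hFC, conjTranspose_mul]
  have hCinv : (C⁻¹)ᴴ * Cᴴ = 1 := by
    rw [← conjTranspose_mul, mul_nonsing_inv C hC, conjTranspose_one]
  simp only [hH, conjTranspose_mul, conjTranspose_conjTranspose, Matrix.mul_assoc]
  rw [← Matrix.mul_assoc (C⁻¹)ᴴ, hCinv, Matrix.one_mul]

lemma conjTranspose_mul_mul_sub_proj_mul {m : Type*} [Fintype m] {Fhat : Matrix l n α}
    {U : Matrix n k α} {V : Matrix l m α} (hFhat : Fhatᴴ * Fhat = 1) (hIA : Uᴴ * Fhatᴴ * V = 0)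
    (X : Matrix l l α) : Uᴴ * Fhatᴴ * (X - Fhat * Fhatᴴ) * V = Uᴴ * Fhatᴴ * X * V := by
  have hproj : Uᴴ * Fhatᴴ * (Fhat * Fhatᴴ) * V = 0 := by
    rw [← Matrix.mul_assoc, Matrix.mul_assoc Uᴴ, hFhat, Matrix.mul_one, hIA]
  rw [Matrix.mul_sub, Matrix.sub_mul, hproj, sub_zero]

end

theorem leakage_bounded_by_chordal_distance
    (N L d m : ℕ) (hd : 0 < d)
    (H : Matrix (Fin N) (Fin L) ℂ)
    (F : Matrix (Fin L) (Fin N) ℂ) (C : Matrix (Fin N) (Fin N) ℂ)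
    (hFC : Hᴴ = F * C) (hC : IsUnit C.det)
    (Fhat : Matrix (Fin L) (Fin N) ℂ) (hFhat : Fhatᴴ * Fhat = 1)
    (U : Matrix (Fin N) (Fin d) ℂ) (hU : Uᴴ * U = 1)
    (V : Matrix (Fin L) (Fin m) ℂ) (hV : Vᴴ * V = 1)
    (hIA : Uᴴ * Fhatᴴ * V = 0)
    (G : Matrix (Fin N) (Fin d) ℂ) (hG : G = C⁻¹ * Fᴴ * Fhat * U)
    (P : ℝ) (hP : 0 < P) :
    (P / d) * frobNormSq (Gᴴ * H * V) ≤ P * frobNormSq (F * Fᴴ - Fhat * Fhatᴴ) ∧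
      P * frobNormSq (F * Fᴴ - Fhat * Fhatᴴ) = 2 * P * chordalDistSq Fhat F := by
  have hleak : Gᴴ * H * V = (Fhat * U)ᴴ * ((F * Fᴴ - Fhat * Fhatᴴ) * V) := by
    rw [hG, receive_filter_conjTranspose_mul_channel hFC hC,
      ← conjTranspose_mul_mul_sub_proj_mul hFhat hIA]
    simp only [conjTranspose_mul, Matrix.mul_assoc]
  have hbound : frobNormSq (Gᴴ * H * V) ≤ frobNormSq (F * Fᴴ - Fhat * Fhatᴴ) := by
    rw [hleak]
    exact (frobNormSq_conjTranspose_mul_le (conjTranspose_mul_self_mul_eq_one hFhat hU) _).trans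
      (frobNormSq_mul_le hV _)
  refine ⟨mul_le_mul (div_le_self hP.le (by exact_mod_cast hd)) hbound (frobNormSq_nonneg _)
    hP.le, ?_⟩
  rw [chordalDistSq, frobNormSq_sub_comm]
  ring
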